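/- arXiv:2403.19268 — 2 statements merged into one kernel-verified Lean document; each statement's English description precedes it below -/
import Mathlib

section
/- (Li–Zhang) Let n ≥ 1, l > 0 and f ∈ C¹(ℝⁿ). Suppose for every x ∈ ℝⁿ there exists λ(x) > 0 such that (λ(x)/|y−x|)^l · f(x + λ(x)²(y−x)/|y−x|²) = f(y) for all y ∈ ℝⁿ∖{x}. Then there exist a ≥ 0, d > 0 and x̄ ∈ ℝⁿ such that f(x) = ± (a/(d² + |x−x̄|²))^{l/2} for all x. -/
open Real Filter Topology RealInnerProductSpace

theorem aux_const {n : ℕ} (hn : 1 ≤ n) (l : ℝ) (hl : 0 < l)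
    (f : EuclideanSpace ℝ (Fin n) → ℝ) (hf : Continuous f)
    (lam : EuclideanSpace ℝ (Fin n) → ℝ) (hpos : ∀ x, 0 < lam x)
    (hid : ∀ x y, y ≠ x → (lam x / ‖y - x‖) ^ l *
      f (x + ((lam x) ^ 2 / ‖y - x‖ ^ 2) • (y - x)) = f y)
    (x₁ x₂ : EuclideanSpace ℝ (Fin n)) :
    lam x₁ ^ l * f x₁ = lam x₂ ^ l * f x₂ := by
  set v : EuclideanSpace ℝ (Fin n) := EuclideanSpace.single ⟨0, hn⟩ (1:ℝ) with hv
  have hnv : ‖v‖ = 1 := by simp [hv]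
  -- basic norm lower bound
  have hlow : ∀ (x : EuclideanSpace ℝ (Fin n)) (t : ℝ), t - ‖x‖ ≤ ‖t • v - x‖ := by
    intro x t
    have h1 : ‖t • v‖ - ‖x‖ ≤ ‖t • v - x‖ := norm_sub_norm_le _ _
    have h2 : ‖t • v‖ = |t| := by rw [norm_smul, hnv]; simp
    nlinarith [abs_nonneg t, le_abs_self t]
  have htend : ∀ x : EuclideanSpace ℝ (Fin n),
      Tendsto (fun t : ℝ => ‖t • v - x‖) atTop atTop := by
    intro x
    exact tendsto_atTop_mono (hlow x) (tendsto_atTop_add_const_right _ _ tendsto_id)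
  -- ratio limit
  have hratio : ∀ x : EuclideanSpace ℝ (Fin n),
      Tendsto (fun t : ℝ => ‖t • v - x‖ / t) atTop (𝓝 1) := by
    intro x
    have h1 : Tendsto (fun t : ℝ => ‖v - t⁻¹ • x‖) atTop (𝓝 1) := by
      have h2 : Tendsto (fun t : ℝ => t⁻¹ • x) atTop (𝓝 (0 : EuclideanSpace ℝ (Fin n))) := by
        have := tendsto_inv_atTop_zero (𝕜 := ℝ)
        simpa using this.smul_const x
      have h3 : Tendsto (fun t : ℝ => v - t⁻¹ • x) atTop (𝓝 v) := by
        simpa using tendsto_const_nhds.sub h2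
      simpa [hnv] using h3.norm
    refine h1.congr' ?_
    filter_upwards [eventually_gt_atTop (0:ℝ)] with t ht
    have : t • (v - t⁻¹ • x) = t • v - x := by
      rw [smul_sub, smul_inv_smul₀ ht.ne']
    rw [← this, norm_smul]
    rw [Real.norm_eq_abs, abs_of_pos ht, mul_div_cancel_left₀ _ ht.ne']
  -- z tends to x
  have hz : ∀ x : EuclideanSpace ℝ (Fin n),
      Tendsto (fun t : ℝ => x + ((lam x) ^ 2 / ‖t • v - x‖ ^ 2) • (t • v - x)) atTop (𝓝 x) := by
    intro x
    have hd : Tendsto (fun t : ℝ => ((lam x) ^ 2 / ‖t • v - x‖ ^ 2) • (t • v - x)) atTop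
        (𝓝 (0 : EuclideanSpace ℝ (Fin n))) := by
      rw [tendsto_zero_iff_norm_tendsto_zero]
      have heq : ∀ᶠ t : ℝ in atTop,
          ‖((lam x) ^ 2 / ‖t • v - x‖ ^ 2) • (t • v - x)‖ = (lam x)^2 / ‖t • v - x‖ := by
        filter_upwards [(htend x).eventually_gt_atTop 0] with t ht
        rw [norm_smul, Real.norm_eq_abs, abs_of_nonneg (by positivity)]
        field_simp
      exact Tendsto.congr' (heq.mono fun t h => h.symm)
        (tendsto_const_nhds.div_atTop (htend x))
    simpa using tendsto_const_nhds.add hd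
  -- eventual identity
  have hkey : ∀ᶠ t : ℝ in atTop,
      lam x₂ ^ l * f (x₂ + ((lam x₂) ^ 2 / ‖t • v - x₂‖ ^ 2) • (t • v - x₂)) =
      (‖t • v - x₂‖ / ‖t • v - x₁‖) ^ l *
        (lam x₁ ^ l * f (x₁ + ((lam x₁) ^ 2 / ‖t • v - x₁‖ ^ 2) • (t • v - x₁))) := by
    filter_upwards [(htend x₁).eventually_gt_atTop 0, (htend x₂).eventually_gt_atTop 0]
      with t h1 h2
    have hy1 : (t • v) ≠ x₁ := by intro h; rw [h] at h1; simp at h1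
    have hy2 : (t • v) ≠ x₂ := by intro h; rw [h] at h2; simp at h2
    have e1 := hid x₁ (t • v) hy1
    have e2 := hid x₂ (t • v) hy2
    have hr1 : (0:ℝ) < ‖t • v - x₁‖ := h1
    have hr2 : (0:ℝ) < ‖t • v - x₂‖ := h2
    rw [div_rpow (hpos x₁).le hr1.le] at e1
    rw [div_rpow (hpos x₂).le hr2.le] at e2
    rw [div_rpow hr2.le hr1.le]
    have hp1 : (0:ℝ) < ‖t • v - x₁‖ ^ l := rpow_pos_of_pos hr1 l
    have hp2 : (0:ℝ) < ‖t • v - x₂‖ ^ l := rpow_pos_of_pos hr2 l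
    have key : lam x₁ ^ l / ‖t • v - x₁‖ ^ l *
        f (x₁ + ((lam x₁) ^ 2 / ‖t • v - x₁‖ ^ 2) • (t • v - x₁)) =
        lam x₂ ^ l / ‖t • v - x₂‖ ^ l *
        f (x₂ + ((lam x₂) ^ 2 / ‖t • v - x₂‖ ^ 2) • (t • v - x₂)) := by rw [e1, e2]
    rw [div_mul_eq_mul_div, div_mul_eq_mul_div, div_eq_div_iff hp1.ne' hp2.ne'] at key
    rw [div_mul_eq_mul_div, eq_div_iff hp1.ne']
    linarith [key]
  -- limits
  have hL : Tendsto (fun t : ℝ =>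
      lam x₂ ^ l * f (x₂ + ((lam x₂) ^ 2 / ‖t • v - x₂‖ ^ 2) • (t • v - x₂))) atTop
      (𝓝 (lam x₂ ^ l * f x₂)) :=
    tendsto_const_nhds.mul ((hf.tendsto x₂).comp (hz x₂))
  have hrat : Tendsto (fun t : ℝ => (‖t • v - x₂‖ / ‖t • v - x₁‖) ^ l) atTop (𝓝 1) := by
    have h0 : Tendsto (fun t : ℝ => ‖t • v - x₂‖ / ‖t • v - x₁‖) atTop (𝓝 1) := by
      have hdiv := (hratio x₂).div (hratio x₁) one_ne_zero
      rw [show (1:ℝ)/1 = 1 by norm_num] at hdiv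
      refine hdiv.congr' ?_
      filter_upwards [(htend x₁).eventually_gt_atTop 0, eventually_gt_atTop (0:ℝ)] with t h1 ht
      simp only [Pi.div_apply]
      field_simp
    have := h0.rpow_const (p := l) (Or.inl one_ne_zero)
    simpa using this
  have hR : Tendsto (fun t : ℝ =>
      (‖t • v - x₂‖ / ‖t • v - x₁‖) ^ l *
        (lam x₁ ^ l * f (x₁ + ((lam x₁) ^ 2 / ‖t • v - x₁‖ ^ 2) • (t • v - x₁)))) atTop
      (𝓝 (lam x₁ ^ l * f x₁)) := by
    have hA : Tendsto (fun t : ℝ =>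
        lam x₁ ^ l * f (x₁ + ((lam x₁) ^ 2 / ‖t • v - x₁‖ ^ 2) • (t • v - x₁))) atTop
        (𝓝 (lam x₁ ^ l * f x₁)) := tendsto_const_nhds.mul ((hf.tendsto x₁).comp (hz x₁))
    have := hrat.mul hA
    simpa using this
  exact (tendsto_nhds_unique (hL.congr' hkey) hR).symm

theorem aux_deriv {n : ℕ} (ν : ℝ) (hν : 0 < ν)
    (g : EuclideanSpace ℝ (Fin n) → ℝ) (hg : ContDiff ℝ 1 g) (hgpos : ∀ x, 0 < g x)
    (a' : ℝ) (ha' : 0 < a')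
    (xb : EuclideanSpace ℝ (Fin n)) (hmax : fderiv ℝ g xb = 0)
    (q : ℝ) (hq : 0 < q) (hqxb : (a' / g xb) ^ ((2:ℝ)/ν) = q)
    (hid : ∀ x y : EuclideanSpace ℝ (Fin n), y ≠ x →
      a' * g (x + (((a' / g x) ^ ((2:ℝ)/ν)) / ‖y - x‖ ^ 2) • (y - x))
        = g y * g x * (‖y - x‖ ^ 2) ^ (ν/2))
    (y : EuclideanSpace ℝ (Fin n)) (hy : y ≠ xb) (e : EuclideanSpace ℝ (Fin n)) :
    fderiv ℝ g (xb + (q / ‖y - xb‖ ^ 2) • (y - xb))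
        ((1 - q / ‖y - xb‖ ^ 2) • e + (2 * q * ⟪y - xb, e⟫ / (‖y - xb‖ ^ 2) ^ 2) • (y - xb))
      = -(ν * g (xb + (q / ‖y - xb‖ ^ 2) • (y - xb)) * ⟪y - xb, e⟫ / ‖y - xb‖ ^ 2) := by
  have hgd : Differentiable ℝ g := hg.differentiable one_ne_zero
  set u : EuclideanSpace ℝ (Fin n) := y - xb with hu
  have hu0 : u ≠ 0 := sub_ne_zero.mpr hy
  set r2 : ℝ := ‖u‖ ^ 2 with hr2
  have hr2pos : 0 < r2 := by rw [hr2]; exact pow_pos (norm_pos_iff.mpr hu0) 2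
  set z : EuclideanSpace ℝ (Fin n) := xb + (q / r2) • u with hz
  -- curves
  set c₀ : ℝ → EuclideanSpace ℝ (Fin n) := fun t => xb + t • e with hc₀
  have hc₀0 : c₀ 0 = xb := by simp [hc₀]
  have hc₀d : HasDerivAt c₀ e 0 := by
    have h1 : HasDerivAt (fun t : ℝ => t • e) ((1:ℝ) • e) 0 := (hasDerivAt_id 0).smul_const e
    simpa [hc₀] using h1.const_add xb
  -- rho
  set ρ : ℝ → ℝ := fun t => r2 - 2 * ⟪u, e⟫ * t + ‖e‖ ^ 2 * t ^ 2 with hρ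
  have hρeq : ∀ t : ℝ, ‖y - c₀ t‖ ^ 2 = ρ t := by
    intro t
    have h1 : y - c₀ t = u - t • e := by simp only [hc₀, hu]; abel
    rw [h1, norm_sub_sq_real, real_inner_smul_right, norm_smul, Real.norm_eq_abs, mul_pow,
      sq_abs]
    simp only [hρ]
    ring
  have hρ0 : ρ 0 = r2 := by simp [hρ]
  have hρd : HasDerivAt ρ (-(2 * ⟪u, e⟫)) 0 := by
    have h1 : HasDerivAt (fun t : ℝ => r2 - 2 * ⟪u, e⟫ * t + ‖e‖ ^ 2 * t ^ 2)
        (0 - 2 * ⟪u, e⟫ * 1 + ‖e‖ ^ 2 * ((2:ℕ) * 0 ^ (2-1))) 0 :=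
      ((hasDerivAt_const (0:ℝ) r2).sub ((hasDerivAt_id (0:ℝ)).const_mul
        (2 * ⟪u, e⟫))).add ((hasDerivAt_pow 2 (0:ℝ)).const_mul (‖e‖ ^ 2))
    rw [hρ]
    convert h1 using 1
    norm_num
  -- gamma
  have hγd : HasDerivAt (fun t : ℝ => g (c₀ t)) 0 0 := by
    have h1 := ((hgd (c₀ 0)).hasFDerivAt).comp_hasDerivAt 0 hc₀d
    rw [hc₀0, hmax] at h1
    simp only [ContinuousLinearMap.zero_apply] at h1
    exact h1
  have hγ0 : g (c₀ 0) = g xb := by rw [hc₀0]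
  -- Q
  set Qf : ℝ → ℝ := fun t => (a' / g (c₀ t)) ^ ((2:ℝ)/ν) with hQf
  have hQ0 : Qf 0 = q := by rw [hQf]; simp only [hc₀0]; exact hqxb
  have hQd : HasDerivAt Qf 0 0 := by
    have hbase : HasDerivAt (fun t : ℝ => a' / g (c₀ t))
        ((0 * g (c₀ 0) - a' * 0) / (g (c₀ 0)) ^ 2) 0 :=
      (hasDerivAt_const (0:ℝ) a').div hγd (hgpos (c₀ 0)).ne'
    have hrp := Real.hasDerivAt_rpow_const
      (x := a' / g (c₀ 0)) (p := (2:ℝ)/ν) (Or.inl (div_pos ha' (hgpos _)).ne')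
    have h2 := HasDerivAt.comp (0:ℝ) hrp hbase
    simp only [hQf]
    refine h2.congr_deriv ?_
    ring
  -- scalar s and curve c
  set s : ℝ → ℝ := fun t => Qf t / ρ t with hs
  have hs0 : s 0 = q / r2 := by rw [hs]; simp only [hQ0, hρ0]
  have hsd : HasDerivAt s (2 * q * ⟪u, e⟫ / r2 ^ 2) 0 := by
    have h1 : HasDerivAt s ((0 * ρ 0 - Qf 0 * (-(2 * ⟪u, e⟫))) / (ρ 0) ^ 2) 0 :=
      hQd.div hρd (hρ0 ▸ hr2pos.ne')
    convert h1 using 1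
    rw [hQ0, hρ0]
    ring
  set w : ℝ → EuclideanSpace ℝ (Fin n) := fun t => y - c₀ t with hw
  have hw0 : w 0 = u := by rw [hw]; simp only [hc₀0, hu]
  have hwd : HasDerivAt w (-e) 0 := by
    have := hc₀d.const_sub y
    simpa [hw] using this
  set c : ℝ → EuclideanSpace ℝ (Fin n) := fun t => c₀ t + s t • w t with hc
  have hc0 : c 0 = z := by rw [hc]; simp only [hc₀0, hs0, hw0, hz]
  have hcd : HasDerivAt c (e + ((q / r2) • (-e) + (2 * q * ⟪u, e⟫ / r2 ^ 2) • u)) 0 := by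
    have h1 := hc₀d.add (hsd.smul hwd)
    rw [hs0, hw0] at h1
    exact h1
  -- L and R
  have hLd : HasDerivAt (fun t => a' * g (c t))
      (a' * fderiv ℝ g z (e + ((q / r2) • (-e) + (2 * q * ⟪u, e⟫ / r2 ^ 2) • u))) 0 := by
    have h1 := ((hgd (c 0)).hasFDerivAt).comp_hasDerivAt 0 hcd
    rw [hc0] at h1
    exact h1.const_mul a'
  have hRd : HasDerivAt (fun t => g y * g (c₀ t) * (ρ t) ^ (ν/2))
      (g y * g xb * ((ν/2) * r2 ^ (ν/2 - 1) * (-(2 * ⟪u, e⟫)))) 0 := by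
    have hρp : HasDerivAt (fun t => (ρ t) ^ (ν/2)) ((ν/2) * r2 ^ (ν/2 - 1) * (-(2 * ⟪u, e⟫))) 0 := by
      have hrp := Real.hasDerivAt_rpow_const (x := ρ 0) (p := ν/2) (Or.inl (by rw [hρ0]; exact hr2pos.ne'))
      have := HasDerivAt.comp (0:ℝ) hrp hρd
      rw [hρ0] at this
      exact this
    have h2 : HasDerivAt (fun t => g y * g (c₀ t)) 0 0 := by
      simpa using (hγd.const_mul (g y))
    have h3 := h2.mul hρp
    rw [hγ0] at h3
    refine h3.congr_deriv ?_
    rw [hρ0]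
    ring
  -- identity near 0
  have hne : ∀ᶠ t : ℝ in 𝓝 0, c₀ t ≠ y := by
    have hcont : ContinuousAt c₀ 0 := hc₀d.continuousAt
    have := hcont.eventually_ne (by rw [hc₀0]; exact fun h => hy h.symm)
    exact this
  have heq : (fun t => a' * g (c t)) =ᶠ[𝓝 (0:ℝ)] (fun t => g y * g (c₀ t) * (ρ t) ^ (ν/2)) := by
    filter_upwards [hne] with t ht
    have h1 := hid (c₀ t) y (fun h => ht h.symm)
    rw [hρeq t] at h1
    exact h1
  -- equate derivatives
  have huniq := (hRd.congr_of_eventuallyEq heq).unique hLd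
  -- identity at 0
  have hid0 := hid xb y hy
  rw [show (a' / g xb) ^ ((2:ℝ)/ν) = q from hqxb] at hid0
  -- final algebra
  have hz' : xb + (q / ‖y - xb‖ ^ 2) • (y - xb) = z := by rw [hz, hu, hr2]
  have hid0' : a' * g z = g y * g xb * r2 ^ (ν/2) := by
    rw [hz'] at hid0
    rw [← hu, ← hr2] at hid0
    exact hid0
  have hlin : fderiv ℝ g z ((1 - q / r2) • e + (2 * q * ⟪u, e⟫ / r2 ^ 2) • u)
      = fderiv ℝ g z (e + ((q / r2) • (-e) + (2 * q * ⟪u, e⟫ / r2 ^ 2) • u)) := by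
    congr 1
    rw [sub_smul, one_smul, smul_neg]
    abel
  rw [hlin]
  have hrp2 : (0:ℝ) < r2 ^ (ν/2) := Real.rpow_pos_of_pos hr2pos _
  have hr2l : r2 ^ (ν/2 - 1) = r2 ^ (ν/2) / r2 := by rw [Real.rpow_sub hr2pos, Real.rpow_one]
  have h1 : a' * ((fderiv ℝ g z) (e + ((q / r2) • -e + (2 * q * ⟪u, e⟫ / r2 ^ 2) • u)))
      = a' * (-(ν * g z * ⟪u, e⟫ / r2)) := by
    rw [← huniq, hr2l]
    have hgyb : g y * g xb = a' * g z / r2 ^ (ν/2) := by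
      rw [eq_div_iff hrp2.ne']
      linarith
    rw [hgyb]
    field_simp
  exact mul_left_cancel₀ ha'.ne' h1

theorem aux_dense {n : ℕ} (hn : 1 ≤ n) (xb : EuclideanSpace ℝ (Fin n)) (q : ℝ) (hq : 0 < q) :
    Dense {z : EuclideanSpace ℝ (Fin n) | z ≠ xb ∧ ‖z - xb‖ ^ 2 ≠ q} := by
  rw [Metric.dense_iff]
  intro x r hr
  set v : EuclideanSpace ℝ (Fin n) := EuclideanSpace.single ⟨0, hn⟩ (1:ℝ) with hv
  have hnv : ‖v‖ = 1 := by simp [hv]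
  by_cases hx : x = xb
  · -- move off xb a little
    set c : ℝ := min (r/2) (Real.sqrt q / 2) with hc
    have hcpos : 0 < c := lt_min (by linarith) (by positivity)
    refine ⟨xb + c • v, ?_, ?_, ?_⟩
    · rw [Metric.mem_ball, hx, dist_eq_norm]
      have : xb + c • v - xb = c • v := by abel
      rw [this, norm_smul, hnv, Real.norm_eq_abs, abs_of_pos hcpos]
      simp only [mul_one]
      calc c ≤ r/2 := min_le_left _ _
        _ < r := by linarith
    · intro h
      have : c • v = 0 := by
        have := congrArg (fun w => w - xb) h
        simpa using this
      rw [smul_eq_zero] at this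
      rcases this with h' | h'
      · exact hcpos.ne' h'
      · rw [h'] at hnv; simp at hnv
    · have h1 : xb + c • v - xb = c • v := by abel
      rw [h1, norm_smul, hnv, Real.norm_eq_abs, abs_of_pos hcpos, mul_one]
      have hcle : c ≤ Real.sqrt q / 2 := min_le_right _ _
      have hs : Real.sqrt q ^ 2 = q := Real.sq_sqrt hq.le
      intro hcon
      nlinarith [hcpos, Real.sqrt_pos.mpr hq]
  · set w : EuclideanSpace ℝ (Fin n) := x - xb with hw
    have hw0 : w ≠ 0 := sub_ne_zero.mpr hx
    have hwpos : 0 < ‖w‖ := norm_pos_iff.mpr hw0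
    by_cases hsq : ‖x - xb‖ ^ 2 = q
    · set δ : ℝ := min (r / (2 * ‖w‖)) 1 with hδ
      have hδpos : 0 < δ := lt_min (by positivity) one_pos
      have hδ1 : δ ≤ 1 := min_le_right _ _
      refine ⟨xb + (1 + δ) • w, ?_, ?_, ?_⟩
      · rw [Metric.mem_ball, dist_eq_norm]
        have h2 : xb + (1 + δ) • w - x = δ • w := by
          rw [hw]; rw [add_smul, one_smul]; abel
        rw [h2, norm_smul, Real.norm_eq_abs, abs_of_pos hδpos]
        calc δ * ‖w‖ ≤ r / (2 * ‖w‖) * ‖w‖ := by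
              apply mul_le_mul_of_nonneg_right (min_le_left _ _) hwpos.le
          _ = r / 2 := by field_simp
          _ < r := by linarith
      · intro h
        have : (1 + δ) • w = 0 := by
          have := congrArg (fun z => z - xb) h
          simpa using this
        rw [smul_eq_zero] at this
        rcases this with h' | h'
        · linarith
        · exact hw0 h'
      · have h1 : xb + (1 + δ) • w - xb = (1 + δ) • w := by abel
        rw [h1, norm_smul, Real.norm_eq_abs, abs_of_pos (by linarith), mul_pow]
        rw [← hw] at hsq
        rw [hsq]
        intro hcon
        nlinarith [hq, hδpos, sq_nonneg δ]
    · exact ⟨x, Metric.mem_ball_self hr, hx, hsq⟩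

theorem aux_grad {n : ℕ} (hn : 1 ≤ n) (ν : ℝ) (hν : 0 < ν)
    (g : EuclideanSpace ℝ (Fin n) → ℝ) (hg : ContDiff ℝ 1 g) (hgpos : ∀ x, 0 < g x)
    (a' : ℝ) (ha' : 0 < a')
    (xb : EuclideanSpace ℝ (Fin n)) (hmax : fderiv ℝ g xb = 0)
    (q : ℝ) (hq : 0 < q) (hqxb : (a' / g xb) ^ ((2:ℝ)/ν) = q)
    (hid : ∀ x y : EuclideanSpace ℝ (Fin n), y ≠ x →
      a' * g (x + (((a' / g x) ^ ((2:ℝ)/ν)) / ‖y - x‖ ^ 2) • (y - x))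
        = g y * g x * (‖y - x‖ ^ 2) ^ (ν/2)) :
    ∀ z : EuclideanSpace ℝ (Fin n), fderiv ℝ g z
      = (-(ν * g z / (q + ‖z - xb‖ ^ 2))) • (innerSL ℝ (z - xb)) := by
  -- Step 1: good points
  have key : ∀ z : EuclideanSpace ℝ (Fin n), z ≠ xb → ‖z - xb‖ ^ 2 ≠ q →
      ∀ e, fderiv ℝ g z e = -(ν * g z * ⟪z - xb, e⟫ / (q + ‖z - xb‖ ^ 2)) := by
    intro z hz hzq
    set w : EuclideanSpace ℝ (Fin n) := z - xb with hw
    have hw0 : w ≠ 0 := sub_ne_zero.mpr hz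
    set A : ℝ := ‖w‖ ^ 2 with hA
    have hApos : 0 < A := by rw [hA]; exact pow_pos (norm_pos_iff.mpr hw0) 2
    set y : EuclideanSpace ℝ (Fin n) := xb + (q / A) • w with hy
    have hyxb : y - xb = (q / A) • w := by rw [hy]; abel
    have hyne : y ≠ xb := by
      intro h
      have h2 : (q / A) • w = 0 := by rw [← hyxb, h, sub_self]
      rcases smul_eq_zero.mp h2 with h' | h'
      · exact (div_pos hq hApos).ne' h'
      · exact hw0 h'
    have hynorm : ‖y - xb‖ ^ 2 = q ^ 2 / A := by
      rw [hyxb, norm_smul, Real.norm_eq_abs, abs_of_pos (div_pos hq hApos), mul_pow, ← hA]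
      field_simp
    have hzy : xb + (q / ‖y - xb‖ ^ 2) • (y - xb) = z := by
      rw [hynorm, hyxb, smul_smul]
      have hsc : q / (q ^ 2 / A) * (q / A) = 1 := by field_simp
      rw [hsc, one_smul, hw]
      abel
    -- the equation for arbitrary e (cleared of denominators)
    have hqA : q + A ≠ 0 := by positivity
    have main' : ∀ e, (q - A) * (fderiv ℝ g z e) + 2 * ⟪w, e⟫ * (fderiv ℝ g z w)
        = -(ν * g z * ⟪w, e⟫) := by
      intro e
      have H := aux_deriv ν hν g hg hgpos a' ha' xb hmax q hq hqxb hid y hyne e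
      rw [hzy, hynorm, hyxb] at H
      rw [map_add, map_smul, map_smul, real_inner_smul_left] at H
      rw [map_smul] at H
      simp only [smul_eq_mul] at H
      set b : ℝ := ⟪w, e⟫ with hb
      have hq' : q ≠ 0 := hq.ne'
      have hA' : A ≠ 0 := hApos.ne'
      field_simp at H
      have hscale : (q ^ 7 * A ^ 2) * ((q - A) * (fderiv ℝ g z e) + 2 * b * (fderiv ℝ g z w))
          = (q ^ 7 * A ^ 2) * (-(ν * g z * b)) := by linear_combination (q ^ 7 * A ^ 2) * H
      exact mul_left_cancel₀ (by positivity) hscale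
    have hKA : (fderiv ℝ g z w) * (q + A) = -(ν * g z * A) := by
      have h := main' w
      rw [real_inner_self_eq_norm_sq, ← hA] at h
      linear_combination h
    intro e
    have hAq : q - A ≠ 0 := sub_ne_zero.mpr (fun h => hzq h.symm)
    have hGq : (fderiv ℝ g z e * (q + A)) * (q - A)
        = (-(ν * g z * ⟪w, e⟫)) * (q - A) := by
      linear_combination (q + A) * main' e - 2 * ⟪w, e⟫ * hKA
    have hG : fderiv ℝ g z e * (q + A) = -(ν * g z * ⟪w, e⟫) := mul_right_cancel₀ hAq hGq
    rw [show -(ν * g z * ⟪w, e⟫ / (q + A)) = (-(ν * g z * ⟪w, e⟫)) / (q + A) by ring,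
      eq_div_iff hqA]
    exact hG
  -- Step 2: continuity extension
  have hcont1 : Continuous (fun z => fderiv ℝ g z) := hg.continuous_fderiv one_ne_zero
  have hcont2 : Continuous (fun z : EuclideanSpace ℝ (Fin n) =>
      (-(ν * g z / (q + ‖z - xb‖ ^ 2))) • (innerSL ℝ (z - xb) :
        EuclideanSpace ℝ (Fin n) →L[ℝ] ℝ)) := by
    apply Continuous.smul (f := fun z => -(ν * g z / (q + ‖z - xb‖ ^ 2)))
      (g := fun z => (innerSL ℝ (z - xb) : EuclideanSpace ℝ (Fin n) →L[ℝ] ℝ))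
    · apply Continuous.neg
      apply Continuous.div (continuous_const.mul (hg.continuous))
        (continuous_const.add (((continuous_id.sub continuous_const).norm).pow 2))
      intro z
      exact (add_pos_of_pos_of_nonneg hq (sq_nonneg _)).ne'
    · exact (innerSL ℝ).continuous.comp (continuous_id.sub continuous_const)
  have heqon : Set.EqOn (fun z => fderiv ℝ g z)
      (fun z : EuclideanSpace ℝ (Fin n) =>
        (-(ν * g z / (q + ‖z - xb‖ ^ 2))) • (innerSL ℝ (z - xb) :
          EuclideanSpace ℝ (Fin n) →L[ℝ] ℝ))
      {z : EuclideanSpace ℝ (Fin n) | z ≠ xb ∧ ‖z - xb‖ ^ 2 ≠ q} := by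
    intro z hz
    apply ContinuousLinearMap.ext
    intro e
    rw [key z hz.1 hz.2 e]
    simp only [ContinuousLinearMap.smul_apply, innerSL_apply_apply, smul_eq_mul]
    ring
  have := Continuous.ext_on (aux_dense hn xb q hq) hcont1 hcont2 heqon
  exact fun z => congrFun this z

theorem aux_phi {n : ℕ} (ν : ℝ) (hν : 0 < ν)
    (g : EuclideanSpace ℝ (Fin n) → ℝ) (hg : ContDiff ℝ 1 g) (hgpos : ∀ x, 0 < g x)
    (xb : EuclideanSpace ℝ (Fin n)) (q : ℝ) (hq : 0 < q)
    (hgrad : ∀ z : EuclideanSpace ℝ (Fin n), fderiv ℝ g z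
      = (-(ν * g z / (q + ‖z - xb‖ ^ 2))) • (innerSL ℝ (z - xb))) :
    ∀ x : EuclideanSpace ℝ (Fin n),
      g x * (q + ‖x - xb‖ ^ 2) ^ (ν/2) = g xb * q ^ (ν/2) := by
  have hgd : Differentiable ℝ g := hg.differentiable one_ne_zero
  set φ : EuclideanSpace ℝ (Fin n) → ℝ :=
    fun x => g x * (q + ‖x - xb‖ ^ 2) ^ (ν/2) with hφ
  have hbase : ∀ x : EuclideanSpace ℝ (Fin n), (0:ℝ) < q + ‖x - xb‖ ^ 2 := by
    intro x; positivity
  have hψdiff : Differentiable ℝ (fun x : EuclideanSpace ℝ (Fin n) => q + ‖x - xb‖ ^ 2) := by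
    have h1 : Differentiable ℝ (fun x : EuclideanSpace ℝ (Fin n) => ‖x - xb‖ ^ 2) := by
      have h2 : (fun x : EuclideanSpace ℝ (Fin n) => ‖x - xb‖ ^ 2)
          = fun x => ⟪x - xb, x - xb⟫ := by
        funext x; rw [real_inner_self_eq_norm_sq]
      rw [h2]
      exact (differentiable_id.sub_const xb).inner ℝ (differentiable_id.sub_const xb)
    exact (differentiable_const q).add h1
  have hφdiff : Differentiable ℝ φ := by
    apply hgd.mul
    intro x
    exact (hψdiff x).rpow_const (Or.inl (hbase x).ne')
  have hφderiv : ∀ z, fderiv ℝ φ z = 0 := by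
    intro z
    apply ContinuousLinearMap.ext
    intro e
    simp only [ContinuousLinearMap.zero_apply]
    -- directional derivative along e
    set w : EuclideanSpace ℝ (Fin n) := z - xb with hw
    set A : ℝ := ‖w‖ ^ 2 with hA
    -- the line
    have hline : HasDerivAt (fun t : ℝ => z + t • e) e 0 := by
      have h1 : HasDerivAt (fun t : ℝ => t • e) ((1:ℝ) • e) 0 := (hasDerivAt_id 0).smul_const e
      simpa using h1.const_add z
    have hcomp : HasDerivAt (fun t : ℝ => φ (z + t • e)) (fderiv ℝ φ z e) 0 := by
      have h1 := ((hφdiff (z + (0:ℝ) • e)).hasFDerivAt).comp_hasDerivAt 0 hline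
      simp only [zero_smul, add_zero] at h1
      exact h1
    -- compute the same derivative explicitly
    set ρ : ℝ → ℝ := fun t => q + (A + 2 * ⟪w, e⟫ * t + ‖e‖ ^ 2 * t ^ 2) with hρ
    have hρeq : ∀ t : ℝ, q + ‖z + t • e - xb‖ ^ 2 = ρ t := by
      intro t
      have h1 : z + t • e - xb = w + t • e := by rw [hw]; abel
      rw [h1, norm_add_sq_real, real_inner_smul_right, norm_smul, Real.norm_eq_abs, mul_pow,
        sq_abs]
      simp only [hρ, hA]
      ring
    have hρ0 : ρ 0 = q + A := by simp [hρ]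
    have hρd : HasDerivAt ρ (2 * ⟪w, e⟫) 0 := by
      have h1 : HasDerivAt (fun t : ℝ => A + 2 * ⟪w, e⟫ * t + ‖e‖ ^ 2 * t ^ 2)
          (0 + 2 * ⟪w, e⟫ * 1 + ‖e‖ ^ 2 * ((2:ℕ) * 0 ^ (2-1))) 0 :=
        (((hasDerivAt_const (0:ℝ) A).add ((hasDerivAt_id (0:ℝ)).const_mul
          (2 * ⟪w, e⟫))).add ((hasDerivAt_pow 2 (0:ℝ)).const_mul (‖e‖ ^ 2)))
      have h2 := h1.const_add q
      rw [hρ]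
      refine h2.congr_deriv ?_
      norm_num
    have hγd : HasDerivAt (fun t : ℝ => g (z + t • e))
        (-(ν * g z / (q + A)) * ⟪w, e⟫) 0 := by
      have h1 := ((hgd (z + (0:ℝ) • e)).hasFDerivAt).comp_hasDerivAt 0 hline
      have h2 : z + (0:ℝ) • e = z := by simp
      rw [h2] at h1
      rw [hgrad z] at h1
      have h3 : ((-(ν * g z / (q + ‖z - xb‖ ^ 2))) • (innerSL ℝ (z - xb))) e
          = -(ν * g z / (q + A)) * ⟪w, e⟫ := by
        simp only [ContinuousLinearMap.smul_apply, innerSL_apply_apply, smul_eq_mul, hw, hA]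
      rw [h3] at h1
      exact h1
    have hρp : HasDerivAt (fun t => (ρ t) ^ (ν/2))
        ((ν/2) * (q + A) ^ (ν/2 - 1) * (2 * ⟪w, e⟫)) 0 := by
      have hrp := Real.hasDerivAt_rpow_const (x := ρ 0) (p := ν/2)
        (Or.inl (by rw [hρ0]; positivity))
      have := HasDerivAt.comp (0:ℝ) hrp hρd
      rw [hρ0] at this
      exact this
    have hprod : HasDerivAt (fun t : ℝ => g (z + t • e) * (ρ t) ^ (ν/2))
        ((-(ν * g z / (q + A)) * ⟪w, e⟫) * (q + A) ^ (ν/2)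
          + g z * ((ν/2) * (q + A) ^ (ν/2 - 1) * (2 * ⟪w, e⟫))) 0 := by
      have h1 := hγd.mul hρp
      have h2 : z + (0:ℝ) • e = z := by simp
      rw [hρ0] at h1
      rw [h2] at h1
      exact h1
    have hval : (-(ν * g z / (q + A)) * ⟪w, e⟫) * (q + A) ^ (ν/2)
        + g z * ((ν/2) * (q + A) ^ (ν/2 - 1) * (2 * ⟪w, e⟫)) = 0 := by
      have hqA : (0:ℝ) < q + A := by rw [hA]; positivity
      rw [Real.rpow_sub hqA, Real.rpow_one]
      field_simp
      ring
    rw [hval] at hprod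
    have hφeq : (fun t : ℝ => φ (z + t • e)) = (fun t : ℝ => g (z + t • e) * (ρ t) ^ (ν/2)) := by
      funext t
      rw [hφ]
      simp only []
      rw [hρeq t]
    rw [hφeq] at hcomp
    exact hcomp.unique hprod
  intro x
  have := is_const_of_fderiv_eq_zero hφdiff hφderiv x xb
  rw [hφ] at this
  simpa using this

theorem aux_pos {n : ℕ} (hn : 1 ≤ n) (l : ℝ) (hl : 0 < l)
    (g : EuclideanSpace ℝ (Fin n) → ℝ) (hg : ContDiff ℝ 1 g) (hgpos : ∀ x, 0 < g x)
    (lam : EuclideanSpace ℝ (Fin n) → ℝ) (hlampos : ∀ x, 0 < lam x)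
    (hid : ∀ x y : EuclideanSpace ℝ (Fin n), y ≠ x →
      (lam x / ‖y - x‖) ^ l * g (x + (lam x ^ 2 / ‖y - x‖ ^ 2) • (y - x)) = g y) :
    ∃ (a d : ℝ) (xbar : EuclideanSpace ℝ (Fin n)), 0 ≤ a ∧ 0 < d ∧
      ∀ x, g x = (a / (d ^ 2 + ‖x - xbar‖ ^ 2)) ^ (l / 2) := by
  set a' : ℝ := lam 0 ^ l * g 0 with ha'def
  have ha' : 0 < a' := mul_pos (rpow_pos_of_pos (hlampos 0) l) (hgpos 0)
  have hconst : ∀ x, lam x ^ l * g x = a' :=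
    fun x => aux_const hn l hl g hg.continuous lam hlampos hid x 0
  have hlam_l : ∀ x, lam x ^ l = a' / g x := by
    intro x
    rw [eq_div_iff (hgpos x).ne']
    exact hconst x
  have hlam_sq : ∀ x, (lam x : ℝ) ^ (2:ℕ) = (a' / g x) ^ ((2:ℝ)/l) := by
    intro x
    rw [← hlam_l x, ← Real.rpow_natCast (lam x) 2, ← Real.rpow_mul (hlampos x).le]
    congr 1
    push_cast
    field_simp
  have hrl : ∀ y x : EuclideanSpace ℝ (Fin n), (‖y - x‖ ^ 2) ^ (l/2) = ‖y - x‖ ^ l := by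
    intro y x
    rw [← Real.rpow_natCast ‖y - x‖ 2, ← Real.rpow_mul (norm_nonneg _)]
    norm_num
    congr 1
    ring
  have hid' : ∀ x y : EuclideanSpace ℝ (Fin n), y ≠ x →
      a' * g (x + (((a' / g x) ^ ((2:ℝ)/l)) / ‖y - x‖ ^ 2) • (y - x))
        = g y * g x * (‖y - x‖ ^ 2) ^ (l/2) := by
    intro x y hyx
    have h := hid x y hyx
    have hr : (0:ℝ) < ‖y - x‖ := norm_pos_iff.mpr (sub_ne_zero.mpr hyx)
    rw [div_rpow (hlampos x).le hr.le, hlam_l x, hlam_sq x] at h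
    rw [hrl y x]
    have hrpow : (0:ℝ) < ‖y - x‖ ^ l := rpow_pos_of_pos hr l
    field_simp [(hgpos x).ne', hrpow.ne'] at h
    linear_combination h
  -- decay and global max
  obtain ⟨xM, hxM_mem, hxM⟩ := (isCompact_closedBall (0 : EuclideanSpace ℝ (Fin n))
    (lam 0)).exists_isMaxOn ⟨0, by simp [Metric.mem_closedBall, (hlampos 0).le]⟩
    hg.continuous.continuousOn
  set M : ℝ := g xM with hM
  have hdecay : ∀ y : EuclideanSpace ℝ (Fin n), lam 0 ≤ ‖y‖ →
      g y ≤ (lam 0 / ‖y‖) ^ l * M := by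
    intro y hy
    have hy0 : y ≠ 0 := by
      intro h
      rw [h, norm_zero] at hy
      exact absurd hy (not_le.mpr (hlampos 0))
    have hyn : (0:ℝ) < ‖y‖ := lt_of_lt_of_le (hlampos 0) hy
    have h := hid 0 y (by simpa using hy0)
    rw [sub_zero] at h
    have hz_mem : (0 : EuclideanSpace ℝ (Fin n)) + (lam 0 ^ 2 / ‖y‖ ^ 2) • y ∈
        Metric.closedBall (0 : EuclideanSpace ℝ (Fin n)) (lam 0) := by
      rw [Metric.mem_closedBall, dist_eq_norm, sub_zero, zero_add, norm_smul,
        Real.norm_eq_abs, abs_of_pos (div_pos (pow_pos (hlampos 0) 2) (pow_pos hyn 2))]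
      rw [div_mul_eq_mul_div]
      rw [div_le_iff₀ (pow_pos hyn 2)]
      calc lam 0 ^ 2 * ‖y‖ = lam 0 * lam 0 * ‖y‖ := by ring
        _ ≤ lam 0 * ‖y‖ * ‖y‖ := by nlinarith [mul_nonneg (mul_nonneg (hlampos 0).le hyn.le) (sub_nonneg.mpr hy)]
        _ = lam 0 * ‖y‖ ^ 2 := by ring
    have hgz : g ((0 : EuclideanSpace ℝ (Fin n)) + (lam 0 ^ 2 / ‖y‖ ^ 2) • y) ≤ M :=
      hxM hz_mem
    rw [← h]
    apply mul_le_mul_of_nonneg_left hgz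
    exact Real.rpow_nonneg (div_nonneg (hlampos 0).le (norm_nonneg y)) l
  have hRex : ∃ R : ℝ, lam 0 ≤ R ∧ ∀ s : ℝ, R ≤ s → (lam 0 / s) ^ l * M < g 0 := by
    have t1 : Tendsto (fun s : ℝ => lam 0 / s) atTop (𝓝 0) :=
      tendsto_const_nhds.div_atTop tendsto_id
    have t2 : Tendsto (fun s : ℝ => (lam 0 / s) ^ l) atTop (𝓝 0) := by
      have := t1.rpow_const (p := l) (Or.inr hl.le)
      rwa [Real.zero_rpow hl.ne'] at this
    have t3 : Tendsto (fun s : ℝ => (lam 0 / s) ^ l * M) atTop (𝓝 0) := by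
      simpa using t2.mul_const M
    have t4 : ∀ᶠ s : ℝ in atTop, (lam 0 / s) ^ l * M < g 0 :=
      t3.eventually_lt_const (hgpos 0)
    obtain ⟨R₀, hR₀⟩ := eventually_atTop.mp t4
    exact ⟨max R₀ (lam 0), le_max_right _ _, fun s hs => hR₀ s (le_trans (le_max_left _ _) hs)⟩
  obtain ⟨R, hRlam, hR⟩ := hRex
  have hRpos : 0 < R := lt_of_lt_of_le (hlampos 0) hRlam
  obtain ⟨xb, hxb_mem, hxb⟩ := (isCompact_closedBall (0 : EuclideanSpace ℝ (Fin n))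
    R).exists_isMaxOn ⟨0, by simp [Metric.mem_closedBall, hRpos.le]⟩
    hg.continuous.continuousOn
  have hglobal : ∀ z, g z ≤ g xb := by
    intro z
    by_cases hz : ‖z‖ ≤ R
    · exact hxb (by rw [Metric.mem_closedBall, dist_eq_norm, sub_zero]; exact hz)
    · push_neg at hz
      have h1 : g z ≤ (lam 0 / ‖z‖) ^ l * M := hdecay z (le_trans hRlam hz.le)
      have h2 : (lam 0 / ‖z‖) ^ l * M < g 0 := hR ‖z‖ hz.le
      have h3 : g 0 ≤ g xb := hxb (by simp [Metric.mem_closedBall, hRpos.le])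
      linarith
  have hmax : fderiv ℝ g xb = 0 :=
    IsLocalMax.fderiv_eq_zero (Filter.Eventually.of_forall hglobal)
  set q : ℝ := (a' / g xb) ^ ((2:ℝ)/l) with hqdef
  have hq : 0 < q := rpow_pos_of_pos (div_pos ha' (hgpos xb)) _
  have hgrad := aux_grad hn l hl g hg hgpos a' ha' xb hmax q hq rfl hid'
  have hphi := aux_phi l hl g hg hgpos xb q hq hgrad
  refine ⟨(g xb) ^ ((2:ℝ)/l) * q, Real.sqrt q, xb, mul_nonneg (Real.rpow_nonneg (hgpos xb).le _) hq.le, Real.sqrt_pos.mpr hq, ?_⟩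
  intro x
  have hd2 : Real.sqrt q ^ 2 = q := Real.sq_sqrt hq.le
  rw [hd2]
  have hbase : (0:ℝ) < q + ‖x - xb‖ ^ 2 := by have := hq; positivity
  rw [div_rpow (mul_nonneg (Real.rpow_nonneg (hgpos xb).le _) hq.le) hbase.le]
  have hnum : ((g xb) ^ ((2:ℝ)/l) * q) ^ (l/2) = g xb * q ^ (l/2) := by
    rw [Real.mul_rpow (Real.rpow_nonneg (hgpos xb).le _) hq.le, ← Real.rpow_mul (hgpos xb).le]
    congr 1
    rw [show (2:ℝ)/l * (l/2) = 1 by field_simp, Real.rpow_one]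
  rw [hnum]
  have hrpz : (0:ℝ) < (q + ‖x - xb‖ ^ 2) ^ (l/2) := rpow_pos_of_pos hbase _
  rw [eq_div_iff hrpz.ne']
  exact hphi x



theorem li_zhang_classification {n : ℕ} (hn : 1 ≤ n) (l : ℝ) (hl : 0 < l)
    (f : EuclideanSpace ℝ (Fin n) → ℝ) (hf : ContDiff ℝ 1 f)
    (hinv : ∀ x : EuclideanSpace ℝ (Fin n), ∃ lam : ℝ, 0 < lam ∧
      ∀ y : EuclideanSpace ℝ (Fin n), y ≠ x →
        (lam / ‖y - x‖) ^ l * f (x + (lam ^ 2 / ‖y - x‖ ^ 2) • (y - x)) = f y) :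
    ∃ (a d : ℝ) (xbar : EuclideanSpace ℝ (Fin n)) (ε : ℝ), 0 ≤ a ∧ 0 < d ∧
      (ε = 1 ∨ ε = -1) ∧
      ∀ x : EuclideanSpace ℝ (Fin n),
        f x = ε * (a / (d ^ 2 + ‖x - xbar‖ ^ 2)) ^ (l / 2) := by
  choose lam hlampos hid using hinv
  set A₀ : ℝ := lam 0 ^ l * f 0 with hA₀def
  have hconst : ∀ x, lam x ^ l * f x = A₀ :=
    fun x => aux_const hn l hl f hf.continuous lam hlampos hid x 0
  by_cases hA₀ : A₀ = 0
  · refine ⟨0, 1, 0, 1, le_refl 0, one_pos, Or.inl rfl, ?_⟩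
    intro x
    have h1 : lam x ^ l * f x = 0 := by rw [hconst x, hA₀]
    have h2 : f x = 0 := by
      rcases mul_eq_zero.mp h1 with h | h
      · exact absurd h (rpow_pos_of_pos (hlampos x) l).ne'
      · exact h
    rw [h2, zero_div, Real.zero_rpow (div_pos hl two_pos).ne', mul_zero]
  · have hfne : ∀ x, f x ≠ 0 := by
      intro x hfx
      apply hA₀
      rw [← hconst x, hfx, mul_zero]
    have hsign : (∀ x, 0 < f x) ∨ (∀ x, 0 < -f x) := by
      rcases lt_or_gt_of_ne (hfne 0) with h0 | h0
      · right
        intro x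
        rcases lt_or_gt_of_ne (hfne x) with h | h
        · linarith
        · exfalso
          have hmem : (0:ℝ) ∈ Set.Icc (f 0) (f x) := ⟨h0.le, h.le⟩
          obtain ⟨w, hw⟩ := intermediate_value_univ 0 x hf.continuous hmem
          exact hfne w hw
      · left
        intro x
        rcases lt_or_gt_of_ne (hfne x) with h | h
        · exfalso
          have hmem : (0:ℝ) ∈ Set.Icc (f x) (f 0) := ⟨h.le, h0.le⟩
          obtain ⟨w, hw⟩ := intermediate_value_univ x 0 hf.continuous hmem
          exact hfne w hw
        · exact h
    rcases hsign with hpos | hneg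
    · obtain ⟨a, d, xbar, ha, hd, hform⟩ := aux_pos hn l hl f hf hpos lam hlampos hid
      exact ⟨a, d, xbar, 1, ha, hd, Or.inl rfl, fun x => by rw [one_mul]; exact hform x⟩
    · set g : EuclideanSpace ℝ (Fin n) → ℝ := fun x => -f x with hgdef
      have hgC : ContDiff ℝ 1 g := hf.neg
      have hgpos : ∀ x, 0 < g x := hneg
      have hid_g : ∀ x y : EuclideanSpace ℝ (Fin n), y ≠ x →
          (lam x / ‖y - x‖) ^ l * g (x + (lam x ^ 2 / ‖y - x‖ ^ 2) • (y - x)) = g y := by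
        intro x y h
        simp only [hgdef]
        rw [← hid x y h]
        ring
      obtain ⟨a, d, xbar, ha, hd, hform⟩ := aux_pos hn l hl g hgC hgpos lam hlampos hid_g
      refine ⟨a, d, xbar, -1, ha, hd, Or.inr rfl, fun x => ?_⟩
      have hx := hform x
      simp only [hgdef] at hx
      linarith [hx]
end

section
/- (Li–Zhang) Let n ≥ 2, ν > 0 and f ∈ C¹(ℝⁿ₊). Assume that (λ/|y−x|)^ν · f(x + λ²(y−x)/|y−x|²) ≤ f(y) for every λ > 0, every x ∈ ∂ℝⁿ₊, and every y ∈ ℝⁿ₊ with |y−x| ≥ λ. Then f depends only on the last coordinate: f(x′, t) = f(0, t) for all (x′, t) ∈ ℝⁿ₊. -/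
open Set Filter Topology

theorem li_zhang_aux {m : ℕ} (ν : ℝ) (hν : 0 < ν)
    (f : EuclideanSpace ℝ (Fin (m + 1)) → ℝ)
    (hf : ContDiffOn ℝ 1 f {y | 0 ≤ y (Fin.last m)})
    (hinv : ∀ (lam : ℝ) (x y : EuclideanSpace ℝ (Fin (m + 1))),
      0 < lam → x (Fin.last m) = 0 → 0 < y (Fin.last m) → lam ≤ ‖y - x‖ →
        (lam / ‖y - x‖) ^ ν * f (x + (lam ^ 2 / ‖y - x‖ ^ 2) • (y - x)) ≤ f y)
    (y z : EuclideanSpace ℝ (Fin (m + 1)))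
    (hy : 0 < y (Fin.last m)) (hz : z (Fin.last m) = y (Fin.last m)) :
    f z ≤ f y := by
  set n := Fin.last m with hn
  set t : ℝ := y n with htdef
  set e : EuclideanSpace ℝ (Fin (m + 1)) := EuclideanSpace.single n 1 with he
  have hyz : (y - z) n = 0 := by
    simp [PiLp.sub_apply, hz, htdef]
  have hen : e n = 1 := by simp [he]
  have key : ∀ ε : ℝ, ε ∈ Set.Ioo (0:ℝ) 1 →
      Real.sqrt (1 - ε) ^ ν * f (z - (ε * t) • e) ≤ f y := by
    rintro ε ⟨hε0, hε1⟩
    set x : EuclideanSpace ℝ (Fin (m + 1)) := y - ε⁻¹ • (y - z) - t • e with hx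
    have hxn : x n = 0 := by
      simp [hx, PiLp.sub_apply, PiLp.smul_apply, hyz, hen, htdef]
    have hbn : (y - x) n = t := by
      simp [hx, PiLp.sub_apply, PiLp.smul_apply, hyz, hen]
    have hbne : y - x ≠ 0 := by
      intro h
      rw [h] at hbn
      simp at hbn
      exact hy.ne (by simpa [htdef] using hbn)
    have hnorm : 0 < ‖y - x‖ := norm_pos_iff.mpr hbne
    have h1ε : (0:ℝ) < 1 - ε := by linarith
    have hs : 0 < Real.sqrt (1 - ε) := Real.sqrt_pos.mpr h1ε
    have hs1 : Real.sqrt (1 - ε) ≤ 1 := Real.sqrt_le_one.mpr (by linarith)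
    have h1 := hinv (Real.sqrt (1 - ε) * ‖y - x‖) x y (by positivity) hxn hy
      (by nlinarith)
    have hdiv : Real.sqrt (1 - ε) * ‖y - x‖ / ‖y - x‖ = Real.sqrt (1 - ε) :=
      mul_div_cancel_right₀ _ hnorm.ne'
    have hcoef : (Real.sqrt (1 - ε) * ‖y - x‖) ^ 2 / ‖y - x‖ ^ 2 = 1 - ε := by
      rw [mul_pow, Real.sq_sqrt h1ε.le]
      field_simp
    have hpt : x + ((1 - ε)) • (y - x) = z - (ε * t) • e := by
      rw [hx]
      match_scalars <;> (field_simp; try ring)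
    rw [hdiv, hcoef, hpt] at h1
    exact h1
  -- limit as ε → 0⁺
  have hne : (𝓝[Set.Ioo (0:ℝ) 1] 0).NeBot := left_nhdsWithin_Ioo_neBot one_pos
  have hzt : z n = t := hz
  have hzmem : z ∈ {y : EuclideanSpace ℝ (Fin (m + 1)) | 0 ≤ y n} := by
    simp only [Set.mem_setOf_eq, hzt]; exact hy.le
  have hcont : ContinuousWithinAt f {y : EuclideanSpace ℝ (Fin (m + 1)) | 0 ≤ y n} z :=
    (hf.continuousOn) z hzmem
  have hpath : Tendsto (fun ε : ℝ => z - (ε * t) • e) (𝓝[Set.Ioo (0:ℝ) 1] 0)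
      (𝓝[{y : EuclideanSpace ℝ (Fin (m + 1)) | 0 ≤ y n}] z) := by
    rw [tendsto_nhdsWithin_iff]
    constructor
    · have hc : Continuous (fun ε : ℝ => z - (ε * t) • e) := by fun_prop
      have := hc.tendsto 0
      simpa using this.mono_left nhdsWithin_le_nhds
    · filter_upwards [self_mem_nhdsWithin] with ε hε
      simp only [Set.mem_setOf_eq, PiLp.sub_apply, PiLp.smul_apply, hen, hzt, smul_eq_mul,
        mul_one]
      nlinarith [hε.1, hε.2, hy]
  have hA : Tendsto (fun ε : ℝ => Real.sqrt (1 - ε) ^ ν) (𝓝[Set.Ioo (0:ℝ) 1] 0) (𝓝 1) := by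
    have h0 : ContinuousAt (fun x : ℝ => Real.sqrt (1 - x)) 0 := by fun_prop
    have h1 : ContinuousAt (fun x : ℝ => Real.sqrt (1 - x) ^ ν) 0 :=
      h0.rpow_const (Or.inr hν.le)
    have := h1.tendsto
    have h2 : Real.sqrt (1 - (0:ℝ)) ^ ν = 1 := by simp
    rw [h2] at this
    exact this.mono_left nhdsWithin_le_nhds
  have hB : Tendsto (fun ε : ℝ => f (z - (ε * t) • e)) (𝓝[Set.Ioo (0:ℝ) 1] 0) (𝓝 (f z)) :=
    hcont.tendsto.comp hpath
  have hlim : Tendsto (fun ε : ℝ => Real.sqrt (1 - ε) ^ ν * f (z - (ε * t) • e))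
      (𝓝[Set.Ioo (0:ℝ) 1] 0) (𝓝 (f z)) := by
    have := hA.mul hB
    simpa using this
  exact le_of_tendsto hlim (by filter_upwards [self_mem_nhdsWithin] with ε hε using key ε hε)

theorem li_zhang_halfspace {m : ℕ} (hm : 1 ≤ m) (ν : ℝ) (hν : 0 < ν)
    (f : EuclideanSpace ℝ (Fin (m + 1)) → ℝ)
    (hf : ContDiffOn ℝ 1 f {y | 0 ≤ y (Fin.last m)})
    (hinv : ∀ (lam : ℝ) (x y : EuclideanSpace ℝ (Fin (m + 1))),
      0 < lam → x (Fin.last m) = 0 → 0 < y (Fin.last m) → lam ≤ ‖y - x‖ →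
        (lam / ‖y - x‖) ^ ν * f (x + (lam ^ 2 / ‖y - x‖ ^ 2) • (y - x)) ≤ f y) :
    ∀ y z : EuclideanSpace ℝ (Fin (m + 1)),
      0 < y (Fin.last m) → z (Fin.last m) = y (Fin.last m) → f y = f z := by
  intro y z hy hz
  have hzpos : 0 < z (Fin.last m) := hz ▸ hy
  exact le_antisymm
    (li_zhang_aux ν hν f hf hinv z y hzpos hz.symm)
    (li_zhang_aux ν hν f hf hinv y z hy hz)
end
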